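/- arXiv:2605.19330 — 3 statements merged into one kernel-verified Lean document; each statement's English description precedes it below -/
import Mathlib

section
/- (Chebyshev completeness, Proposition 1, finite-set version.) Let M ≥ 1 and let S ⊆ [0,1]^M be a finite set. If x ∈ S is Pareto-optimal in S and satisfies x_j < 1 for all j, then there exists a weight vector w in the simplex Δ^{M−1} with w_j > 0 for all j such that x minimizes the Chebyshev scalarization over S: s_w(x) ≤ s_w(y) for all y ∈ S. In particular, every such Pareto-optimal point — including those in non-convex regions of the front — is reachable by Chebyshev scalarization. -/
/-- `y` Pareto-dominates `x`: `y_j ≥ x_j` for all `j` and `y_j > x_j` for some `j`. -/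
def Dominates {M : ℕ} (y x : Fin M → ℝ) : Prop :=
  (∀ j, x j ≤ y j) ∧ ∃ j, x j < y j

/-- Chebyshev scalarization with ideal point `z* = (1,…,1)`:
`s_w(x) = max_j w_j * (1 - x_j)` (lower is better). -/
noncomputable def cheb {M : ℕ} (hM : 1 ≤ M) (w x : Fin M → ℝ) : ℝ :=
  Finset.univ.sup' (Finset.univ_nonempty_iff.mpr (Fin.pos_iff_nonempty.mp hM))
    (fun j => w j * (1 - x j))

/-!
Weight each objective by the reciprocal of its gap `1 - x_j` to the ideal point, normalised to
sum to one. Then every term `w_j (1 - x_j)` of the scalarization of `x` takes the same value `c`,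
so a point `y` scoring strictly below `c` has `w_j (1 - y_j) < w_j (1 - x_j)`, i.e. `x_j < y_j`,
in every coordinate, and would dominate `x`.
-/

section Scalarization

variable {M : ℕ} (hM : 1 ≤ M) {w x y : Fin M → ℝ}

theorem cheb_eq_of_forall_eq {c : ℝ} (h : ∀ j, w j * (1 - x j) = c) : cheb hM w x = c := by
  simp only [cheb, h, Finset.sup'_const]

theorem lt_of_cheb_lt {j : Fin M} (hw : 0 < w j) (h : cheb hM w y < w j * (1 - x j)) :
    x j < y j := by
  have hy : w j * (1 - y j) ≤ cheb hM w y := Finset.le_sup' (fun k => w k * (1 - y k)) (by simp)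
  have := lt_of_mul_lt_mul_left (hy.trans_lt h) hw.le
  linarith

theorem dominates_of_cheb_lt {c : ℝ} (hw : ∀ j, 0 < w j) (hx : ∀ j, w j * (1 - x j) = c)
    (hy : cheb hM w y < c) : Dominates y x := by
  have hlt : ∀ j, x j < y j := fun j => lt_of_cheb_lt hM (hw j) (hx j ▸ hy)
  obtain ⟨j⟩ := Fin.pos_iff_nonempty.mp hM
  exact ⟨fun k => (hlt k).le, j, hlt j⟩

end Scalarization

section Weights

variable {ι : Type*} [Fintype ι] (x : ι → ℝ)

noncomputable def gapWeight (j : ι) : ℝ :=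
  (1 - x j)⁻¹ / ∑ k, (1 - x k)⁻¹

variable {x}

theorem gapWeight_pos [Nonempty ι] (hx : ∀ j, x j < 1) (j : ι) : 0 < gapWeight x j := by
  have hinv : ∀ k, 0 < (1 - x k)⁻¹ := fun k => inv_pos.mpr (sub_pos.mpr (hx k))
  exact div_pos (hinv j) (Finset.sum_pos (fun k _ => hinv k) Finset.univ_nonempty)

theorem sum_gapWeight [Nonempty ι] (hx : ∀ j, x j < 1) : ∑ j, gapWeight x j = 1 := by
  have hsum : 0 < ∑ k, (1 - x k)⁻¹ :=
    Finset.sum_pos (fun k _ => inv_pos.mpr (sub_pos.mpr (hx k))) Finset.univ_nonempty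
  simp only [gapWeight]
  rw [← Finset.sum_div, div_self hsum.ne']

theorem gapWeight_mul_gap {j : ι} (hxj : x j ≠ 1) :
    gapWeight x j * (1 - x j) = (∑ k, (1 - x k)⁻¹)⁻¹ := by
  have hgap : 1 - x j ≠ 0 := sub_ne_zero.mpr hxj.symm
  simp only [gapWeight]
  field_simp

end Weights

theorem cheb_completeness_general (M : ℕ) (hM : 1 ≤ M)
    (S : Finset (Fin M → ℝ))
    (x : Fin M → ℝ)
    (hxlt : ∀ j, x j < 1)
    (hpareto : ∀ y ∈ S, ¬ Dominates y x) :
    ∃ w : Fin M → ℝ, (∀ j, 0 < w j) ∧ (∑ j, w j = 1) ∧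
      ∀ y ∈ S, cheb hM w x ≤ cheb hM w y := by
  have : Nonempty (Fin M) := Fin.pos_iff_nonempty.mp hM
  have hbalanced := fun j => gapWeight_mul_gap (hxlt j).ne
  refine ⟨gapWeight x, gapWeight_pos hxlt, sum_gapWeight hxlt, fun y hy => ?_⟩
  rw [cheb_eq_of_forall_eq hM hbalanced]
  exact not_lt.mp fun hlt =>
    hpareto y hy (dominates_of_cheb_lt hM (gapWeight_pos hxlt) hbalanced hlt)

/-- Chebyshev completeness (finite-set version): any Pareto-optimal `x ∈ S ⊆ [0,1]^M`
with `x_j < 1` for all `j` minimizes the Chebyshev scalarization over `S`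
for some weight vector `w` in the simplex with strictly positive entries. -/
theorem cheb_completeness (M : ℕ) (hM : 1 ≤ M)
    (S : Finset (Fin M → ℝ)) (hSbox : ∀ z ∈ S, ∀ j, z j ∈ Set.Icc (0 : ℝ) 1)
    (x : Fin M → ℝ) (hx : x ∈ S)
    (hxlt : ∀ j, x j < 1)
    (hpareto : ∀ y ∈ S, ¬ Dominates y x) :
    ∃ w : Fin M → ℝ, (∀ j, 0 < w j) ∧ (∑ j, w j = 1) ∧
      ∀ y ∈ S, cheb hM w x ≤ cheb hM w y :=
  cheb_completeness_general M hM S x hxlt hpareto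
end

section
/- Let M ≥ 1, let S ⊆ [0,∞)^M be a finite set, and let x ∈ ℝ^M satisfy x_j > 0 for all j. Then HVC(x,S) > 0 if and only if x is not weakly dominated by any member of S, i.e., there is no y ∈ S with y_j ≥ x_j for all j. -/
/-!
Let `U` be the region dominated by `S`. Adding `x` adds the box `[0, x] \ U`, so `HVC(x, S)` is its
volume. If some `y ∈ S` dominates `x`, the box lies inside `U`. Otherwise `x ∉ U`, and since `U` is
closed a neighbourhood of `x` misses `U`; it meets the open box `∏ (0, x_j)`, which has `x` in its
closure, in a nonempty open set, so the contribution is positive.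
-/

/-- Hypervolume with reference point at the origin: the Lebesgue measure of the
union of axis-aligned boxes `∏_j [0, x_j]` over `x ∈ S`. -/
noncomputable def HV {M : ℕ} (S : Set (Fin M → ℝ)) : ℝ :=
  (MeasureTheory.volume (⋃ x ∈ S, Set.Icc (0 : Fin M → ℝ) x)).toReal

/-- Hypervolume contribution of `x` to `S`: `HVC(x,S) = HV(S ∪ {x}) − HV(S)`. -/
noncomputable def HVC {M : ℕ} (x : Fin M → ℝ) (S : Set (Fin M → ℝ)) : ℝ :=
  HV (insert x S) - HV S

open MeasureTheory Set

section DominatedRegion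

variable {ι : Type*}

def dominatedRegion (S : Set (ι → ℝ)) : Set (ι → ℝ) :=
  ⋃ y ∈ S, Icc 0 y

theorem mem_dominatedRegion {S : Set (ι → ℝ)} {z : ι → ℝ} :
    z ∈ dominatedRegion S ↔ 0 ≤ z ∧ ∃ y ∈ S, z ≤ y := by
  simp [dominatedRegion]

theorem Icc_zero_subset_dominatedRegion {S : Set (ι → ℝ)} {y : ι → ℝ} (hy : y ∈ S) :
    Icc 0 y ⊆ dominatedRegion S :=
  subset_biUnion_of_mem (u := fun y => Icc (0 : ι → ℝ) y) hy

theorem isClosed_dominatedRegion {S : Set (ι → ℝ)} (hS : S.Finite) :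
    IsClosed (dominatedRegion S) :=
  hS.isClosed_biUnion fun _ _ => isClosed_Icc

theorem measurableSet_dominatedRegion [Finite ι] {S : Set (ι → ℝ)} (hS : S.Finite) :
    MeasurableSet (dominatedRegion S) :=
  (isClosed_dominatedRegion hS).measurableSet

theorem volume_dominatedRegion_lt_top [Fintype ι] {S : Set (ι → ℝ)} (hS : S.Finite) :
    volume (dominatedRegion S) < ⊤ :=
  measure_biUnion_lt_top hS fun _ _ => isCompact_Icc.measure_lt_top

theorem volume_Icc_diff_pos [Fintype ι] {a x : ι → ℝ} (hax : ∀ j, a j < x j) {C : Set (ι → ℝ)}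
    (hC : IsClosed C) (hxC : x ∉ C) : 0 < volume (Icc a x \ C) := by
  let box : Set (ι → ℝ) := univ.pi fun j => Ioo (a j) (x j)
  have hbox_open : IsOpen box := isOpen_set_pi finite_univ fun j _ => isOpen_Ioo
  have hx_closure : x ∈ closure box := by
    rw [closure_pi_set]
    intro j _
    simp only [closure_Ioo (hax j).ne, right_mem_Icc, (hax j).le]
  have hmeet : (Cᶜ ∩ box).Nonempty :=
    mem_closure_iff.mp hx_closure Cᶜ hC.isOpen_compl hxC
  refine (hC.isOpen_compl.inter hbox_open |>.measure_pos volume hmeet).trans_le (measure_mono ?_)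
  rintro z ⟨hzC, hz⟩
  exact ⟨⟨fun j => (hz j trivial).1.le, fun j => (hz j trivial).2.le⟩, hzC⟩

end DominatedRegion

theorem HV_eq_volume_dominatedRegion {M : ℕ} (S : Set (Fin M → ℝ)) :
    HV S = (volume (dominatedRegion S)).toReal :=
  rfl

theorem HVC_eq_volume_Icc_diff {M : ℕ} {S : Set (Fin M → ℝ)} (hS : S.Finite) (x : Fin M → ℝ) :
    HVC x S = (volume (Icc 0 x \ dominatedRegion S)).toReal := by
  have hinsert : dominatedRegion (insert x S) = dominatedRegion S ∪ (Icc 0 x \ dominatedRegion S) := by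
    rw [dominatedRegion, biUnion_insert, union_comm, union_sdiff_self, dominatedRegion]
  rw [HVC, HV_eq_volume_dominatedRegion, HV_eq_volume_dominatedRegion, hinsert,
    measure_union disjoint_sdiff_right (measurableSet_Icc.diff (measurableSet_dominatedRegion hS)),
    ENNReal.toReal_add (volume_dominatedRegion_lt_top hS).ne
      (measure_ne_top_of_subset sdiff_subset measure_Icc_lt_top.ne), add_sub_cancel_left]

theorem HVC_pos_iff_not_weakly_dominated_general (M : ℕ)
    (S : Set (Fin M → ℝ)) (hS : S.Finite)
    (x : Fin M → ℝ) (hx : ∀ j, 0 < x j) :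
    0 < HVC x S ↔ ¬ ∃ y ∈ S, ∀ j, x j ≤ y j := by
  rw [HVC_eq_volume_Icc_diff hS]
  constructor
  · rintro hpos ⟨y, hy, hxy⟩
    have hcovered : Icc 0 x ⊆ dominatedRegion S :=
      (Icc_subset_Icc_right hxy).trans (Icc_zero_subset_dominatedRegion hy)
    simp [sdiff_eq_empty.mpr hcovered] at hpos
  · intro hundominated
    have hxU : x ∉ dominatedRegion S := fun hxU => by
      obtain ⟨-, y, hy, hxy⟩ := mem_dominatedRegion.mp hxU
      exact hundominated ⟨y, hy, hxy⟩
    exact ENNReal.toReal_pos (volume_Icc_diff_pos hx (isClosed_dominatedRegion hS) hxU).ne'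
      (measure_ne_top_of_subset sdiff_subset measure_Icc_lt_top.ne)

/-- For `x` with strictly positive coordinates, `HVC(x,S) > 0` iff `x` is not
weakly dominated by any member of `S`. -/
theorem HVC_pos_iff_not_weakly_dominated (M : ℕ) (hM : 1 ≤ M)
    (S : Set (Fin M → ℝ)) (hS : S.Finite) (hSpos : ∀ y ∈ S, ∀ j, 0 ≤ y j)
    (x : Fin M → ℝ) (hx : ∀ j, 0 < x j) :
    0 < HVC x S ↔ ¬ ∃ y ∈ S, ∀ j, x j ≤ y j :=
  HVC_pos_iff_not_weakly_dominated_general M S hS x hx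
end

section
/- (Strict monotonicity of the hypervolume indicator.) Let M ≥ 1 and let S, S' ⊆ [0,∞)^M be finite sets such that (i) every x ∈ S is weakly dominated by some x' ∈ S', and (ii) there exists x' ∈ S' with x'_j > 0 for all j that is not weakly dominated by any x ∈ S. Then HV(S') > HV(S). -/
open MeasureTheory Set

theorem measure_lt_measure_of_subset_of_sdiff_pos {α : Type*} [MeasurableSpace α]
    {μ : Measure α} {s t : Set α} (hst : s ⊆ t) (hs : NullMeasurableSet s μ) (ht : μ t ≠ ⊤)
    (hpos : 0 < μ (t \ s)) : μ s < μ t := by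
  have hs_fin : μ s ≠ ⊤ := ne_top_of_le_ne_top ht (measure_mono hst)
  calc μ s < μ s + μ (t \ s) := ENNReal.lt_add_right hs_fin hpos.ne'
    _ = μ t := by rw [measure_add_sdiff hs, union_eq_self_of_subset_left hst]

theorem biUnion_Icc_subset_biUnion_Icc {α : Type*} [Preorder α] {S S' : Set α} (a : α)
    (hdom : ∀ x ∈ S, ∃ x' ∈ S', x ≤ x') : ⋃ x ∈ S, Icc a x ⊆ ⋃ x ∈ S', Icc a x := by
  simp only [iUnion_subset_iff]
  intro x hx y hy
  obtain ⟨x', hx', hxx'⟩ := hdom x hx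
  exact mem_biUnion hx' ⟨hy.1, hy.2.trans hxx'⟩

section Box

variable {ι : Type*}

theorem mem_closure_univ_pi_Ioo {a b : ι → ℝ} (hab : ∀ j, a j < b j) :
    b ∈ closure (pi univ fun j => Ioo (a j) (b j)) := by
  rw [closure_pi_set]
  intro j _
  simpa only [closure_Ioo (hab j).ne] using right_mem_Icc.2 (hab j).le

theorem volume_univ_pi_Ioo_sdiff_pos [Fintype ι] {U : Set (ι → ℝ)} (hU : IsClosed U)
    {a b : ι → ℝ} (hab : ∀ j, a j < b j) (hb : b ∉ U) :
    0 < volume ((pi univ fun j => Ioo (a j) (b j)) \ U) := by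
  have hopen : IsOpen ((pi univ fun j => Ioo (a j) (b j)) \ U) :=
    (isOpen_set_pi finite_univ fun j _ => isOpen_Ioo).sdiff hU
  have hne : ((pi univ fun j => Ioo (a j) (b j)) \ U).Nonempty := by
    obtain ⟨y, hyU, hy⟩ :=
      mem_closure_iff_nhds.1 (mem_closure_univ_pi_Ioo hab) Uᶜ (hU.isOpen_compl.mem_nhds hb)
    exact ⟨y, hy, hyU⟩
  exact hopen.measure_pos volume hne

theorem volume_biUnion_Icc_lt_top [Fintype ι] {S : Set (ι → ℝ)} (hS : S.Finite) (a : ι → ℝ) :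
    volume (⋃ x ∈ S, Icc a x) < ⊤ :=
  measure_biUnion_lt_top hS fun _ _ => isCompact_Icc.measure_lt_top

end Box

theorem HV_strict_monotone_general (M : ℕ) (S S' : Set (Fin M → ℝ))
    (hS : S.Finite) (hS' : S'.Finite)
    (hdom : ∀ x ∈ S, ∃ x' ∈ S', ∀ j, x j ≤ x' j)
    (hstrict : ∃ x' ∈ S', (∀ j, 0 < x' j) ∧ ¬ ∃ x ∈ S, ∀ j, x' j ≤ x j) :
    HV S < HV S' := by
  obtain ⟨x', hx'S', hx'pos, hundom⟩ := hstrict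
  set U := ⋃ x ∈ S, Icc (0 : Fin M → ℝ) x
  set U' := ⋃ x ∈ S', Icc (0 : Fin M → ℝ) x
  have hUU' : U ⊆ U' := biUnion_Icc_subset_biUnion_Icc 0 hdom
  have hU_closed : IsClosed U := hS.isClosed_biUnion fun _ _ => isClosed_Icc
  have hx'U : x' ∉ U := by
    simp only [U, mem_iUnion₂]
    rintro ⟨x, hx, -, hx'x⟩
    exact hundom ⟨x, hx, hx'x⟩
  have hbox : (pi univ fun j => Ioo 0 (x' j)) ⊆ U' := fun y hy =>
    mem_biUnion hx'S' ⟨fun j => (hy j trivial).1.le, fun j => (hy j trivial).2.le⟩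
  have hgap : 0 < volume (U' \ U) :=
    (volume_univ_pi_Ioo_sdiff_pos hU_closed hx'pos hx'U).trans_le
      (measure_mono (sdiff_subset_sdiff_left hbox))
  have hU'_fin := (volume_biUnion_Icc_lt_top hS' 0).ne
  exact ENNReal.toReal_strict_mono hU'_fin <|
    measure_lt_measure_of_subset_of_sdiff_pos hUU' hU_closed.measurableSet.nullMeasurableSet
      hU'_fin hgap

/-- Strict monotonicity of the hypervolume indicator: if every point of `S` is
weakly dominated by some point of `S'`, and `S'` contains a strictly positive
point not weakly dominated by any point of `S`, then `HV(S') > HV(S)`. -/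
theorem HV_strict_monotone (M : ℕ) (hM : 1 ≤ M) (S S' : Set (Fin M → ℝ))
    (hS : S.Finite) (hS' : S'.Finite)
    (hSpos : ∀ x ∈ S, ∀ j, 0 ≤ x j) (hS'pos : ∀ x ∈ S', ∀ j, 0 ≤ x j)
    (hdom : ∀ x ∈ S, ∃ x' ∈ S', ∀ j, x j ≤ x' j)
    (hstrict : ∃ x' ∈ S', (∀ j, 0 < x' j) ∧ ¬ ∃ x ∈ S, ∀ j, x' j ≤ x j) :
    HV S < HV S' :=
  HV_strict_monotone_general M S S' hS hS' hdom hstrict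
end
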